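/- Let n = 4f+1 be an odd prime with f odd, and suppose there exist integers x, y with n = x² + 4y², y = −1, such that the cyclotomic numbers of order 4 with respect to the generator α satisfy the f-odd table. Let e(0), e(1), e(2) ∈ {0,1} with e(0)+e(1)+e(2) ≡ 0 (mod 2), and let (a_0,a_1,a_2,a_3) be one of the tuples (s_1,s_2,s_2,s_1), (s_2,s_1,s_1,s_2), (s_2,s_6,s_6,s_2), (s_6,s_2,s_2,s_6), (s_4,s_5,s_5,s_4), (s_5,s_4,s_4,s_5), (s_5,s_3,s_3,s_5), (s_3,s_5,s_5,s_3). Then the quaternary sequence u of length 2n from Construction I satisfies R_u(τ) = ±2 for all 1 ≤ τ < 2n; in particular u is optimal. -/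

import Mathlib

/-- Cross-correlation of two sequences of length `N` over `ℤ_H`, with `ξ = exp(2πi/H)`. -/
noncomputable def crossCorr (H N : ℕ) (s t : ZMod N → ZMod H) (τ : ZMod N) : ℂ :=
  ∑ i ∈ Finset.range N,
    Complex.exp (2 * (Real.pi : ℂ) * Complex.I / (H : ℂ)) ^ ((s (i : ZMod N) - t ((i : ZMod N) + τ)).val)

/-- Cross-correlation of two binary sequences of length `N` (an integer). -/
def binCorr (N : ℕ) (s t : ZMod N → ZMod 2) (τ : ZMod N) : ℤ :=
  ∑ i ∈ Finset.range N, (-1 : ℤ) ^ ((s (i : ZMod N) + t ((i : ZMod N) + τ)).val)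

/-- Cross-correlation of two quaternary sequences of length `N`, with `ξ = √-1`. -/
noncomputable def quadCorr (N : ℕ) (s t : ZMod N → ZMod 4) (τ : ZMod N) : ℂ :=
  ∑ i ∈ Finset.range N, Complex.I ^ ((s (i : ZMod N) - t ((i : ZMod N) + τ)).val)

/-- Interleaving `u = I(a, b)`: `u(2i) = a(i)`, `u(2i+1) = b(i)`. -/
def interleaveSeq {H : ℕ} (n : ℕ) (a b : ZMod n → ZMod H) : ZMod (2 * n) → ZMod H :=
  fun k => if k.val % 2 = 0 then a ((k.val / 2 : ℕ) : ZMod n) else b ((k.val / 2 : ℕ) : ZMod n)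

/-- The inverse Gray mapping `φ⁻¹ : ℤ₂ × ℤ₂ → ℤ₄`. -/
def grayInv (a b : ZMod 2) : ZMod 4 :=
  if a = 0 then (if b = 0 then 0 else 1) else (if b = 0 then 3 else 2)

/-- Construction I: the quaternary sequence of length `2n` built from
`a₀, a₁, a₂, a₃` and bits `e₀, e₁, e₂`. -/
def constructionI (n : ℕ) (a0 a1 a2 a3 : ZMod n → ZMod 2)
    (e0 e1 e2 : ZMod 2) : ZMod (2 * n) → ZMod 4 :=
  let lam : ZMod n := (((n + 1) / 2 : ℕ) : ZMod n)
  let c := interleaveSeq n a0 (fun i => e0 + a1 (i + lam))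
  let d := interleaveSeq n (fun i => e1 + a2 i) (fun i => e2 + a3 (i + lam))
  fun i => grayInv (c i) (d i)

/-- The cyclotomic class `D_i` of order 4 w.r.t. the generator `α`. -/
def cycClass (n f : ℕ) (α : ZMod n) (i : ℕ) : Set (ZMod n) :=
  {x | ∃ t < f, x = α ^ (4 * t + i)}

/-- The cyclotomic number `(i, j)` of order 4: `|(D_i + 1) ∩ D_j|`. -/
noncomputable def cycNum (n f : ℕ) (α : ZMod n) (i j : ℕ) : ℕ :=
  Set.ncard {x : ZMod n | x - 1 ∈ cycClass n f α i ∧ x ∈ cycClass n f α j}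

open Classical in
/-- The binary sequence of length `n` with support set `D_i ∪ D_j`. -/
noncomputable def cycSeq (n f : ℕ) (α : ZMod n) (i j : ℕ) : ZMod n → ZMod 2 :=
  fun x => if x ∈ cycClass n f α i ∪ cycClass n f α j then 1 else 0

/-- Six binary sequences with supports `D₀∪D₁, D₀∪D₂, D₀∪D₃, D₁∪D₂, D₁∪D₃, D₂∪D₃`. -/
noncomputable def sixSeq (n f : ℕ) (α : ZMod n) : Fin 6 → ZMod n → ZMod 2
  | 0 => cycSeq n f α 0 1
  | 1 => cycSeq n f α 0 2
  | 2 => cycSeq n f α 0 3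
  | 3 => cycSeq n f α 1 2
  | 4 => cycSeq n f α 1 3
  | 5 => cycSeq n f α 2 3

/-- 16 times the cyclotomic numbers of order 4 in the `f` odd case. -/
def oddTable16 (n x y : ℤ) (i j : ℕ) : ℤ :=
  match i, j with
  | 0, 0 => n - 7 + 2*x
  | 0, 1 => n + 1 + 2*x - 8*y
  | 0, 2 => n + 1 - 6*x
  | 0, 3 => n + 1 + 2*x + 8*y
  | 1, 0 => n - 3 - 2*x
  | 1, 1 => n - 3 - 2*x
  | 1, 2 => n + 1 + 2*x + 8*y
  | 1, 3 => n + 1 + 2*x - 8*y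
  | 2, 0 => n - 7 + 2*x
  | 2, 1 => n - 3 - 2*x
  | 2, 2 => n - 7 + 2*x
  | 2, 3 => n - 3 - 2*x
  | 3, 0 => n - 3 - 2*x
  | 3, 1 => n + 1 + 2*x + 8*y
  | 3, 2 => n + 1 + 2*x - 8*y
  | 3, 3 => n - 3 - 2*x
  | _, _ => 0

/-- 16 times the cyclotomic numbers of order 4 in the `f` even case. -/
def evenTable16 (n x y : ℤ) (i j : ℕ) : ℤ :=
  match i, j with
  | 0, 0 => n - 11 - 6*x
  | 0, 1 => n - 3 + 2*x + 8*y
  | 0, 2 => n - 3 + 2*x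
  | 0, 3 => n - 3 + 2*x - 8*y
  | 1, 0 => n - 3 + 2*x + 8*y
  | 1, 1 => n - 3 + 2*x - 8*y
  | 1, 2 => n + 1 - 2*x
  | 1, 3 => n + 1 - 2*x
  | 2, 0 => n - 3 + 2*x
  | 2, 1 => n + 1 - 2*x
  | 2, 2 => n - 3 + 2*x
  | 2, 3 => n + 1 - 2*x
  | 3, 0 => n - 3 + 2*x - 8*y
  | 3, 1 => n + 1 - 2*x
  | 3, 2 => n + 1 - 2*x
  | 3, 3 => n - 3 + 2*x + 8*y
  | _, _ => 0


/-!
Write `u = φ⁻¹(c, d)`. Pointwise inspection of the Gray map gives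
`2 R_u = (R_c + R_d) + i (R_{c,d} - R_{d,c})`. For a tuple of the form `(a, b, b, a)`,
interleaving turns the correlations of `c` and `d` at an even shift `2σ` into
`R_a(σ) + R_b(σ)`, and at an odd shift `2σ + 1` into `±(R_{a,b} + R_{b,a})(σ + λ)`, because
`2λ ≡ 1 (mod n)`; in both cases the imaginary part cancels, the constant bits cancelling by
`e₀ + e₁ + e₂ = 0`. Hence `R_u = ±2` as soon as `R_a + R_b = -2` off the peak and
`R_{a,b} + R_{b,a} = ±2` everywhere.

For `a`, `b` supported on unions of two cyclotomic classes, `R_{a,b}(σ)` equals `2 - n` plus four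
times a sum of four numbers `|{x ∈ D_i | x + σ ∈ D_j}|`; multiplying by `σ⁻¹ ∈ D_{-k}` identifies
these with cyclotomic numbers, and the `f`-odd table with `y = -1` makes the two sums above
exactly `-2` and `±2` for the four listed pairs (and their swaps).
-/

open Finset

section BinaryCorrelation

lemma neg_one_pow_val_add (a b : ZMod 2) :
    (-1 : ℤ) ^ (a + b).val = (-1) ^ a.val * (-1) ^ b.val := by
  revert a b; decide

lemma sum_range_natCast_eq_sum_univ {M : Type*} [AddCommMonoid M] (N : ℕ) [NeZero N]
    (F : ZMod N → M) : ∑ i ∈ range N, F i = ∑ z : ZMod N, F z := by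
  refine sum_nbij' (fun i ↦ (i : ZMod N)) ZMod.val (by simp) (by simp [ZMod.val_lt]) ?_ ?_ ?_
  · intro i hi; exact ZMod.val_natCast_of_lt (mem_range.mp hi)
  · intro z _; exact ZMod.natCast_zmod_val z
  · intro i _; rfl

lemma sum_range_two_mul {M : Type*} [AddCommMonoid M] (n : ℕ) (g : ℕ → M) :
    ∑ i ∈ range (2 * n), g i = ∑ i ∈ range n, (g (2 * i) + g (2 * i + 1)) := by
  induction n with
  | zero => simp
  | succ m ih =>
    rw [Nat.mul_succ, sum_range_succ, sum_range_succ, sum_range_succ, ih, add_assoc]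

variable {N : ℕ}

lemma binCorr_eq_sum_univ [NeZero N] (s t : ZMod N → ZMod 2) (τ : ZMod N) :
    binCorr N s t τ = ∑ z : ZMod N, (-1 : ℤ) ^ (s z + t (z + τ)).val :=
  sum_range_natCast_eq_sum_univ N fun z ↦ (-1 : ℤ) ^ (s z + t (z + τ)).val

lemma binCorr_comp_add_right (s t : ZMod N → ZMod 2) (g τ : ZMod N) :
    binCorr N s (fun i ↦ t (i + g)) τ = binCorr N s t (τ + g) := by
  simp only [binCorr, add_assoc]

lemma binCorr_comp_add_left [NeZero N] (s t : ZMod N → ZMod 2) (g τ : ZMod N) :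
    binCorr N (fun i ↦ s (i + g)) t τ = binCorr N s t (τ - g) := by
  rw [binCorr_eq_sum_univ, binCorr_eq_sum_univ]
  exact Fintype.sum_equiv (Equiv.addRight g) _ _ fun z ↦ by simp [add_assoc, add_sub_cancel]

lemma binCorr_const_add_left (e : ZMod 2) (s t : ZMod N → ZMod 2) (τ : ZMod N) :
    binCorr N (fun i ↦ e + s i) t τ = (-1) ^ e.val * binCorr N s t τ := by
  simp only [binCorr, mul_sum, add_assoc, neg_one_pow_val_add]

lemma binCorr_const_add_right (e : ZMod 2) (s t : ZMod N → ZMod 2) (τ : ZMod N) :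
    binCorr N s (fun i ↦ e + t i) τ = (-1) ^ e.val * binCorr N s t τ := by
  simp only [binCorr, mul_sum, add_left_comm _ e, neg_one_pow_val_add]

lemma binCorr_comp_add [NeZero N] (s t : ZMod N → ZMod 2) (g τ : ZMod N) :
    binCorr N (fun i ↦ s (i + g)) (fun i ↦ t (i + g)) τ = binCorr N s t τ := by
  rw [binCorr_comp_add_left, binCorr_comp_add_right, sub_add_cancel]

lemma binCorr_const_add_const_add (e e' : ZMod 2) (s t : ZMod N → ZMod 2) (τ : ZMod N) :
    binCorr N (fun i ↦ e + s i) (fun i ↦ e' + t i) τ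
      = (-1) ^ (e + e').val * binCorr N s t τ := by
  rw [binCorr_const_add_left, binCorr_const_add_right, neg_one_pow_val_add, mul_assoc]

lemma binCorr_const_add_self (e : ZMod 2) (s t : ZMod N → ZMod 2) (τ : ZMod N) :
    binCorr N (fun i ↦ e + s i) (fun i ↦ e + t i) τ = binCorr N s t τ := by
  rw [binCorr_const_add_const_add, CharTwo.add_self_eq_zero, ZMod.val_zero, pow_zero, one_mul]

end BinaryCorrelation

section Interleaving

variable {n : ℕ}

lemma interleaveSeq_natCast_two_mul {H : ℕ} [NeZero n] (p q : ZMod n → ZMod H) (m : ℕ) :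
    interleaveSeq n p q (2 * m : ℕ) = p m := by
  have hval : ((2 * m : ℕ) : ZMod (2 * n)).val = 2 * (m % n) := by
    rw [ZMod.val_natCast, Nat.mul_mod_mul_left]
  rw [interleaveSeq, hval, if_pos (by omega), Nat.mul_div_cancel_left _ two_pos,
    ZMod.natCast_mod]

lemma interleaveSeq_natCast_two_mul_add_one {H : ℕ} [NeZero n] (p q : ZMod n → ZMod H)
    (m : ℕ) : interleaveSeq n p q (2 * m + 1 : ℕ) = q m := by
  have hm : m % n < n := Nat.mod_lt m (Nat.pos_of_neZero n)
  have hval : ((2 * m + 1 : ℕ) : ZMod (2 * n)).val = 2 * (m % n) + 1 := by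
    rw [ZMod.val_natCast, ← Nat.mod_add_div m n, mul_add, add_right_comm, ← mul_assoc,
      Nat.add_mul_mod_self_left, Nat.mod_eq_of_lt (by omega), Nat.mod_add_div]
  rw [interleaveSeq, hval, if_neg (by omega), show (2 * (m % n) + 1) / 2 = m % n by omega,
    ZMod.natCast_mod]

lemma binCorr_interleaveSeq_two_mul [NeZero n] (p q r w : ZMod n → ZMod 2) (σ : ℕ) :
    binCorr (2 * n) (interleaveSeq n p q) (interleaveSeq n r w) (2 * σ : ℕ)
      = binCorr n p r σ + binCorr n q w σ := by
  unfold binCorr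
  rw [sum_range_two_mul, ← sum_add_distrib]
  refine sum_congr rfl fun i _ ↦ ?_
  have h0 : ((2 * i : ℕ) : ZMod (2 * n)) + (2 * σ : ℕ) = (2 * (i + σ) : ℕ) := by
    push_cast; ring
  have h1 : ((2 * i + 1 : ℕ) : ZMod (2 * n)) + (2 * σ : ℕ) = (2 * (i + σ) + 1 : ℕ) := by
    push_cast; ring
  rw [h0, h1, interleaveSeq_natCast_two_mul, interleaveSeq_natCast_two_mul,
    interleaveSeq_natCast_two_mul_add_one, interleaveSeq_natCast_two_mul_add_one]
  push_cast; rfl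

lemma binCorr_interleaveSeq_two_mul_add_one [NeZero n] (p q r w : ZMod n → ZMod 2) (σ : ℕ) :
    binCorr (2 * n) (interleaveSeq n p q) (interleaveSeq n r w) (2 * σ + 1 : ℕ)
      = binCorr n p w σ + binCorr n q r (σ + 1 : ℕ) := by
  unfold binCorr
  rw [sum_range_two_mul, ← sum_add_distrib]
  refine sum_congr rfl fun i _ ↦ ?_
  have h0 : ((2 * i : ℕ) : ZMod (2 * n)) + (2 * σ + 1 : ℕ) = (2 * (i + σ) + 1 : ℕ) := by
    push_cast; ring
  have h1 : ((2 * i + 1 : ℕ) : ZMod (2 * n)) + (2 * σ + 1 : ℕ) = (2 * (i + (σ + 1)) : ℕ) := by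
    push_cast; ring
  rw [h0, h1, interleaveSeq_natCast_two_mul, interleaveSeq_natCast_two_mul,
    interleaveSeq_natCast_two_mul_add_one, interleaveSeq_natCast_two_mul_add_one]
  push_cast; rfl

end Interleaving

lemma two_mul_I_pow_val_grayInv_sub (a b a' b' : ZMod 2) :
    2 * Complex.I ^ (grayInv a b - grayInv a' b').val
      = (-1) ^ (a + a').val + (-1) ^ (b + b').val
        + Complex.I * ((-1) ^ (a + b').val - (-1) ^ (b + a').val) := by
  have hI3 : Complex.I ^ 3 = -Complex.I := by rw [pow_succ, Complex.I_sq, neg_one_mul]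
  have val_one : (1 : ZMod 2).val = 1 := rfl
  have val_two : (2 : ZMod 2).val = 0 := rfl
  have val_neg_three : (-3 : ZMod 4).val = 1 := rfl
  have val_neg_two : (-2 : ZMod 4).val = 2 := rfl
  have val_neg_one : (-1 : ZMod 4).val = 3 := rfl
  have val_one' : (1 : ZMod 4).val = 1 := rfl
  have val_two' : (2 : ZMod 4).val = 2 := rfl
  have val_three : (3 : ZMod 4).val = 3 := rfl
  have h01 : ∀ z : ZMod 2, z = 0 ∨ z = 1 := by decide
  rcases h01 a with rfl | rfl <;> rcases h01 b with rfl | rfl <;>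
    rcases h01 a' with rfl | rfl <;> rcases h01 b' with rfl | rfl <;>
    norm_num [grayInv, val_one, val_two, val_neg_three, val_neg_two, val_neg_one, val_one',
      val_two', val_three, hI3] <;> ring_nf

lemma two_mul_quadCorr_grayInv (N : ℕ) (c d : ZMod N → ZMod 2) (τ : ZMod N) :
    2 * quadCorr N (fun i ↦ grayInv (c i) (d i)) (fun i ↦ grayInv (c i) (d i)) τ
      = ((binCorr N c c τ + binCorr N d d τ : ℤ) : ℂ)
        + Complex.I * ((binCorr N c d τ - binCorr N d c τ : ℤ) : ℂ) := by
  unfold quadCorr binCorr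
  push_cast
  rw [mul_sum, ← sum_add_distrib, ← sum_sub_distrib, mul_sum, ← sum_add_distrib]
  exact sum_congr rfl fun i _ ↦ two_mul_I_pow_val_grayInv_sub _ _ _ _

structure IsAlmostComplementaryPair {n : ℕ} (a b : ZMod n → ZMod 2) : Prop where
  autoCorr_add : ∀ τ : ZMod n, τ ≠ 0 → binCorr n a a τ + binCorr n b b τ = -2
  crossCorr_add : ∀ τ : ZMod n,
    binCorr n a b τ + binCorr n b a τ = 2 ∨ binCorr n a b τ + binCorr n b a τ = -2

lemma IsAlmostComplementaryPair.symm {n : ℕ} {a b : ZMod n → ZMod 2}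
    (h : IsAlmostComplementaryPair a b) : IsAlmostComplementaryPair b a where
  autoCorr_add τ hτ := by rw [add_comm]; exact h.autoCorr_add τ hτ
  crossCorr_add τ := by rw [add_comm]; exact h.crossCorr_add τ

section ConstructionI

variable {n : ℕ} (a b : ZMod n → ZMod 2) {e0 e1 e2 : ZMod 2}

lemma quadCorr_constructionI_two_mul [NeZero n] (he : e0 + e1 + e2 = 0) (σ : ℕ) :
    quadCorr (2 * n) (constructionI n a b b a e0 e1 e2) (constructionI n a b b a e0 e1 e2)
        (2 * σ : ℕ) = ((binCorr n a a σ + binCorr n b b σ : ℤ) : ℂ) := by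
  have h02 : e0 + e2 = e1 := by grind
  -- `constructionI n a b b a e0 e1 e2` unfolds to the Gray image of these two interleavings.
  have hg := two_mul_quadCorr_grayInv (2 * n)
    (interleaveSeq n a fun i ↦ e0 + b (i + ((n + 1) / 2 : ℕ)))
    (interleaveSeq n (fun i ↦ e1 + b i) fun i ↦ e2 + a (i + ((n + 1) / 2 : ℕ))) (2 * σ : ℕ)
  rw [binCorr_interleaveSeq_two_mul, binCorr_interleaveSeq_two_mul, binCorr_interleaveSeq_two_mul,
    binCorr_interleaveSeq_two_mul] at hg
  -- Pair up the constant bits before splitting them, so that `he` can cancel them.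
  simp only [binCorr_const_add_self, binCorr_comp_add, binCorr_const_add_const_add, h02,
    add_comm e2 e0] at hg
  simp only [binCorr_const_add_left, binCorr_const_add_right] at hg
  refine mul_left_cancel₀ two_ne_zero (hg.trans ?_)
  push_cast; ring

lemma quadCorr_constructionI_two_mul_add_one (hn : Odd n) (he : e0 + e1 + e2 = 0) (σ : ℕ) :
    quadCorr (2 * n) (constructionI n a b b a e0 e1 e2) (constructionI n a b b a e0 e1 e2)
        (2 * σ + 1 : ℕ)
      = (((-1) ^ e0.val * (binCorr n a b (σ + ((n + 1) / 2 : ℕ))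
          + binCorr n b a (σ + ((n + 1) / 2 : ℕ))) : ℤ) : ℂ) := by
  have : NeZero n := ⟨hn.pos.ne'⟩
  have h12 : e1 + e2 = e0 := by grind
  have h01 : e0 + e1 = e2 := by grind
  have hshift : ((σ + 1 : ℕ) : ZMod n) - ((n + 1) / 2 : ℕ) = σ + ((n + 1) / 2 : ℕ) := by
    have h2 : (n + 1) / 2 + (n + 1) / 2 = n + 1 := by have := Nat.odd_iff.mp hn; omega
    have : (((n + 1) / 2 : ℕ) : ZMod n) + ((n + 1) / 2 : ℕ) = 1 := by
      rw [← Nat.cast_add, h2, Nat.cast_add, ZMod.natCast_self, zero_add, Nat.cast_one]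
    push_cast; linear_combination -this
  have hg := two_mul_quadCorr_grayInv (2 * n)
    (interleaveSeq n a fun i ↦ e0 + b (i + ((n + 1) / 2 : ℕ)))
    (interleaveSeq n (fun i ↦ e1 + b i) fun i ↦ e2 + a (i + ((n + 1) / 2 : ℕ))) (2 * σ + 1 : ℕ)
  rw [binCorr_interleaveSeq_two_mul_add_one, binCorr_interleaveSeq_two_mul_add_one,
    binCorr_interleaveSeq_two_mul_add_one, binCorr_interleaveSeq_two_mul_add_one] at hg
  simp only [binCorr_const_add_const_add, h12, h01, add_comm e2 e1, add_comm e1 e0] at hg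
  simp only [binCorr_const_add_left, binCorr_const_add_right] at hg
  simp only [binCorr_comp_add_left, binCorr_comp_add_right, hshift] at hg
  refine mul_left_cancel₀ two_ne_zero (hg.trans ?_)
  push_cast; ring

variable {a b}

theorem IsAlmostComplementaryPair.quadCorr_constructionI (h : IsAlmostComplementaryPair a b)
    (hn : Odd n) (he : e0 + e1 + e2 = 0) {τ : ℕ} (hτ₀ : 1 ≤ τ) (hτ : τ < 2 * n) :
    quadCorr (2 * n) (constructionI n a b b a e0 e1 e2) (constructionI n a b b a e0 e1 e2) τ = 2
      ∨ quadCorr (2 * n) (constructionI n a b b a e0 e1 e2)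
          (constructionI n a b b a e0 e1 e2) τ = -2 := by
  have : NeZero n := ⟨hn.pos.ne'⟩
  rcases Nat.even_or_odd' τ with ⟨σ, rfl | rfl⟩
  · have hσ : (σ : ZMod n) ≠ 0 := by
      rw [Ne, ZMod.natCast_eq_zero_iff]
      exact Nat.not_dvd_of_pos_of_lt (by omega) (by omega)
    rw [quadCorr_constructionI_two_mul _ _ he, h.autoCorr_add _ hσ]
    norm_num
  · rw [quadCorr_constructionI_two_mul_add_one _ _ hn he]
    rcases neg_one_pow_eq_or ℤ e0.val with hε | hε <;>
      rcases h.crossCorr_add (σ + ((n + 1) / 2 : ℕ)) with hc | hc <;>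
      simp [hε, hc]

end ConstructionI

theorem orderOf_eq_sub_one_of_forall_eq_pow {p : ℕ} [Fact p.Prime] (hp : p ≠ 2) {α : ZMod p}
    (hα : ∀ z : ZMod p, z ≠ 0 → ∃ k : ℕ, z = α ^ k) : orderOf α = p - 1 := by
  have : Fact (2 < p) := ⟨lt_of_le_of_ne (Fact.out : p.Prime).two_le hp.symm⟩
  have hα0 : α ≠ 0 := by
    rintro rfl
    obtain ⟨_ | k, hk⟩ := hα (-1) (neg_ne_zero.mpr one_ne_zero)
    · exact ZMod.neg_one_ne_one (hk.trans (pow_zero 0))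
    · exact neg_ne_zero.mpr one_ne_zero (hk.trans (zero_pow k.succ_ne_zero))
  rw [← Units.val_mk0 hα0, orderOf_units, orderOf_eq_card_of_forall_mem_zpowers,
    Nat.card_eq_fintype_card, ZMod.card_units]
  intro x
  obtain ⟨k, hk⟩ := hα x x.ne_zero
  exact ⟨k, Units.ext (by simp [hk])⟩

section Cyclotomy

variable {n f : ℕ} {α : ZMod n}

lemma pow_mem_cycClass_iff (hf : 0 < f) (hα : orderOf α = 4 * f) {i : ℕ} (hi : i < 4) (m : ℕ) :
    α ^ m ∈ cycClass n f α i ↔ m % 4 = i := by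
  have hfin : IsOfFinOrder α := orderOf_pos_iff.mp (by omega)
  constructor
  · rintro ⟨t, -, ht⟩
    rw [hfin.pow_eq_pow_iff_modEq, hα] at ht
    have := Nat.ModEq.of_mul_right f ht
    unfold Nat.ModEq at this
    omega
  · intro hm
    have hlt := Nat.mod_lt m (show 4 * f > 0 by omega)
    have hmod : m % (4 * f) % 4 = m % 4 := Nat.mod_mod_of_dvd m (dvd_mul_right 4 f)
    refine ⟨m % (4 * f) / 4, by omega, ?_⟩
    rw [hfin.pow_eq_pow_iff_modEq, hα, show 4 * (m % (4 * f) / 4) + i = m % (4 * f) by omega]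
    exact (Nat.mod_modEq m (4 * f)).symm

lemma ne_zero_of_mem_cycClass [Fact n.Prime] (hf : 0 < f) (hα : orderOf α = 4 * f) {i : ℕ}
    {z : ZMod n} (hz : z ∈ cycClass n f α i) : z ≠ 0 := by
  obtain ⟨t, -, rfl⟩ := hz
  exact ((orderOf_pos_iff.mp (by omega)).isUnit.pow _).ne_zero

lemma exists_mem_cycClass (hf : 0 < f) (hα : orderOf α = 4 * f)
    (hgen : ∀ z : ZMod n, z ≠ 0 → ∃ k : ℕ, z = α ^ k) {z : ZMod n} (hz : z ≠ 0) :
    ∃ k < 4, z ∈ cycClass n f α k := by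
  obtain ⟨m, rfl⟩ := hgen z hz
  exact ⟨m % 4, Nat.mod_lt _ four_pos, (pow_mem_cycClass_iff hf hα (Nat.mod_lt _ four_pos) m).2 rfl⟩

lemma disjoint_cycClass (hf : 0 < f) (hα : orderOf α = 4 * f) {i j : ℕ} (hi : i < 4)
    (hj : j < 4) (hij : i ≠ j) : Disjoint (cycClass n f α i) (cycClass n f α j) := by
  rw [Set.disjoint_left]
  rintro _ ⟨t, -, rfl⟩ h
  rw [pow_mem_cycClass_iff hf hα hj] at h
  omega

lemma mul_mem_cycClass_iff [Fact n.Prime] (hf : 0 < f) (hα : orderOf α = 4 * f)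
    (hgen : ∀ z : ZMod n, z ≠ 0 → ∃ k : ℕ, z = α ^ k) {k j : ℕ} (hk : k < 4) (hj : j < 4)
    {σ w : ZMod n} (hσ : σ ∈ cycClass n f α k) :
    σ * w ∈ cycClass n f α j ↔ w ∈ cycClass n f α ((j + 4 - k) % 4) := by
  rcases eq_or_ne w 0 with rfl | hw
  · simp only [mul_zero]
    exact iff_of_false (fun h ↦ ne_zero_of_mem_cycClass hf hα h rfl)
      (fun h ↦ ne_zero_of_mem_cycClass hf hα h rfl)
  obtain ⟨s, -, rfl⟩ := hσ
  obtain ⟨m, rfl⟩ := hgen w hw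
  rw [← pow_add, pow_mem_cycClass_iff hf hα hj, pow_mem_cycClass_iff hf hα (Nat.mod_lt _ four_pos)]
  omega

lemma ncard_cycClass (hf : 0 < f) (hα : orderOf α = 4 * f) (i : ℕ) :
    (cycClass n f α i).ncard = f := by
  have hfin : IsOfFinOrder α := orderOf_pos_iff.mp (by omega)
  have himage : cycClass n f α i = (fun t ↦ α ^ (4 * t + i)) '' (range f : Set ℕ) := by
    ext; simp [cycClass, eq_comm]
  rw [himage, Set.InjOn.ncard_image, Set.ncard_coe_finset, card_range]
  intro t ht s hs h
  rw [hfin.pow_eq_pow_iff_modEq, hα] at h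
  have := Nat.ModEq.mul_left_cancel' four_ne_zero (Nat.ModEq.add_right_cancel' i h)
  simp only [coe_range, Set.mem_Iio] at ht hs
  rwa [Nat.ModEq, Nat.mod_eq_of_lt ht, Nat.mod_eq_of_lt hs] at this

end Cyclotomy

section MatchCount

variable {N : ℕ}

noncomputable def matchCount (S T : Set (ZMod N)) (τ : ZMod N) : ℕ :=
  {x | x ∈ S ∧ x + τ ∈ T}.ncard

lemma matchCount_union_left [NeZero N] {A B : Set (ZMod N)} (h : Disjoint A B) (T : Set (ZMod N))
    (τ : ZMod N) : matchCount (A ∪ B) T τ = matchCount A T τ + matchCount B T τ := by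
  unfold matchCount
  rw [← Set.ncard_union_eq _ (Set.toFinite _) (Set.toFinite _)]
  · congr 1; ext; simp [or_and_right]
  · exact Set.disjoint_left.mpr fun x hA hB ↦ Set.disjoint_left.mp h hA.1 hB.1

lemma matchCount_union_right [NeZero N] (S : Set (ZMod N)) {C D : Set (ZMod N)} (h : Disjoint C D)
    (τ : ZMod N) : matchCount S (C ∪ D) τ = matchCount S C τ + matchCount S D τ := by
  unfold matchCount
  rw [← Set.ncard_union_eq _ (Set.toFinite _) (Set.toFinite _)]
  · congr 1; ext; simp [and_or_left]
  · exact Set.disjoint_left.mpr fun x hC hD ↦ Set.disjoint_left.mp h hC.2 hD.2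

lemma sum_boole_eq_ncard {ι : Type*} [Fintype ι] (P : ι → Prop) [DecidablePred P] :
    ∑ z : ι, (if P z then 1 else 0 : ℤ) = {z | P z}.ncard := by
  rw [sum_boole, Set.ncard_eq_toFinset_card', Set.toFinset_ofPred]

lemma binCorr_eq_ncard [NeZero N] (s t : ZMod N → ZMod 2) (τ : ZMod N) :
    binCorr N s t τ = N - 2 * {x | s x = 1}.ncard - 2 * {x | t x = 1}.ncard
      + 4 * matchCount {x | s x = 1} {x | t x = 1} τ := by
  have hpt : ∀ a b : ZMod 2, (-1 : ℤ) ^ (a + b).val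
      = 1 - 2 * (if a = 1 then 1 else 0) - 2 * (if b = 1 then 1 else 0)
        + 4 * if a = 1 ∧ b = 1 then 1 else 0 := by decide
  have hshift : ∑ z : ZMod N, (if t (z + τ) = 1 then 1 else 0 : ℤ)
      = ∑ z : ZMod N, if t z = 1 then 1 else 0 :=
    Fintype.sum_equiv (Equiv.addRight τ) _ _ fun _ ↦ rfl
  rw [binCorr_eq_sum_univ]
  simp only [hpt]
  rw [sum_add_distrib, sum_sub_distrib, sum_sub_distrib, ← mul_sum, ← mul_sum, ← mul_sum, hshift,
    sum_boole_eq_ncard, sum_boole_eq_ncard, sum_boole_eq_ncard, sum_const, card_univ,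
    ZMod.card, matchCount]
  simp

end MatchCount

section CyclotomicCorrelation

variable {n f : ℕ} {α : ZMod n}

lemma matchCount_cycClass [Fact n.Prime] (hf : 0 < f) (hα : orderOf α = 4 * f)
    (hgen : ∀ z : ZMod n, z ≠ 0 → ∃ k : ℕ, z = α ^ k) {i j k : ℕ} (hi : i < 4) (hj : j < 4)
    (hk : k < 4) {σ : ZMod n} (hσ : σ ∈ cycClass n f α k) :
    matchCount (cycClass n f α i) (cycClass n f α j) σ
      = cycNum n f α ((i + 4 - k) % 4) ((j + 4 - k) % 4) := by
  -- `z ↦ σ (z - 1)` carries `(D_{i-k} + 1) ∩ D_{j-k}` onto `{x ∈ D_i | x + σ ∈ D_j}`.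
  let g : ZMod n ≃ ZMod n :=
    (Equiv.mulLeft₀ σ (ne_zero_of_mem_cycClass hf hα hσ)).trans (Equiv.subRight σ)
  have hpre : {z | z - 1 ∈ cycClass n f α ((i + 4 - k) % 4) ∧ z ∈ cycClass n f α ((j + 4 - k) % 4)}
      = g ⁻¹' {x | x ∈ cycClass n f α i ∧ x + σ ∈ cycClass n f α j} := by
    ext z
    change _ ↔ σ * z - σ ∈ cycClass n f α i ∧ σ * z - σ + σ ∈ cycClass n f α j
    rw [sub_add_cancel, ← mul_sub_one, mul_mem_cycClass_iff hf hα hgen hk hi hσ,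
      mul_mem_cycClass_iff hf hα hgen hk hj hσ]
    rfl
  unfold matchCount cycNum
  rw [hpre, Set.ncard_preimage_of_injective_subset_range g.injective (by simp)]

lemma matchCount_cycClass_zero (hf : 0 < f) (hα : orderOf α = 4 * f) {i j : ℕ} (hi : i < 4)
    (hj : j < 4) :
    matchCount (cycClass n f α i) (cycClass n f α j) 0 = if i = j then f else 0 := by
  unfold matchCount
  split_ifs with hij
  · simp [hij, ncard_cycClass hf hα]
  · convert Set.ncard_empty (ZMod n)
    refine Set.eq_empty_iff_forall_notMem.mpr fun x ⟨hx, hx'⟩ ↦ ?_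
    exact Set.disjoint_left.mp (disjoint_cycClass hf hα hi hj hij) hx (by simpa using hx')

lemma binCorr_cycSeq (hnf : n = 4 * f + 1) (hf : 0 < f) (hα : orderOf α = 4 * f)
    {i j i' j' : ℕ} (hi : i < 4) (hj : j < 4) (hi' : i' < 4) (hj' : j' < 4) (hij : i ≠ j)
    (hij' : i' ≠ j') (τ : ZMod n) :
    binCorr n (cycSeq n f α i j) (cycSeq n f α i' j') τ
      = 2 - n + 4 * (matchCount (cycClass n f α i) (cycClass n f α i') τ
          + matchCount (cycClass n f α i) (cycClass n f α j') τ
          + matchCount (cycClass n f α j) (cycClass n f α i') τ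
          + matchCount (cycClass n f α j) (cycClass n f α j') τ : ℕ) := by
  have : NeZero n := ⟨by omega⟩
  have hD := disjoint_cycClass (n := n) hf hα hi hj hij
  have hD' := disjoint_cycClass (n := n) hf hα hi' hj' hij'
  have hsupp : ∀ a b : ℕ, {x | cycSeq n f α a b x = 1} = cycClass n f α a ∪ cycClass n f α b := by
    intro a b; ext x; simp [cycSeq, or_iff_not_imp_left]
  rw [binCorr_eq_ncard, hsupp, hsupp, Set.ncard_union_eq hD, Set.ncard_union_eq hD',
    matchCount_union_left hD, matchCount_union_right _ hD', matchCount_union_right _ hD',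
    ncard_cycClass hf hα, ncard_cycClass hf hα, ncard_cycClass hf hα, ncard_cycClass hf hα]
  have hn : (n : ℤ) = 4 * f + 1 := by exact_mod_cast hnf
  push_cast
  linear_combination 2 * hn

end CyclotomicCorrelation

section OddTable

variable {n f : ℕ} {α : ZMod n}

lemma sixteen_mul_binCorr_cycSeq [Fact n.Prime] (hnf : n = 4 * f + 1) (hf : 0 < f)
    (hα : orderOf α = 4 * f) (hgen : ∀ z : ZMod n, z ≠ 0 → ∃ k : ℕ, z = α ^ k)
    {T : ℕ → ℕ → ℤ} (hT : ∀ i < 4, ∀ j < 4, 16 * (cycNum n f α i j : ℤ) = T i j)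
    {i j i' j' k : ℕ} (hi : i < 4) (hj : j < 4) (hi' : i' < 4) (hj' : j' < 4) (hk : k < 4)
    (hij : i ≠ j) (hij' : i' ≠ j') {σ : ZMod n} (hσ : σ ∈ cycClass n f α k) :
    16 * binCorr n (cycSeq n f α i j) (cycSeq n f α i' j') σ
      = 16 * (2 - n) + 4 * (T ((i + 4 - k) % 4) ((i' + 4 - k) % 4)
          + T ((i + 4 - k) % 4) ((j' + 4 - k) % 4) + T ((j + 4 - k) % 4) ((i' + 4 - k) % 4)
          + T ((j + 4 - k) % 4) ((j' + 4 - k) % 4)) := by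
  have hT' (a b : ℕ) := hT ((a + 4 - k) % 4) (Nat.mod_lt _ four_pos) ((b + 4 - k) % 4)
    (Nat.mod_lt _ four_pos)
  rw [binCorr_cycSeq hnf hf hα hi hj hi' hj' hij hij', matchCount_cycClass hf hα hgen hi hi' hk hσ,
    matchCount_cycClass hf hα hgen hi hj' hk hσ, matchCount_cycClass hf hα hgen hj hi' hk hσ,
    matchCount_cycClass hf hα hgen hj hj' hk hσ]
  push_cast
  linear_combination 4 * (hT' i i' + hT' i j' + hT' j i' + hT' j j')

theorem isAlmostComplementaryPair_cycSeq [Fact n.Prime] (hnf : n = 4 * f + 1) (hf : 0 < f)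
    (hα : orderOf α = 4 * f) (hgen : ∀ z : ZMod n, z ≠ 0 → ∃ k : ℕ, z = α ^ k) {x : ℤ}
    (hTab : ∀ i < 4, ∀ j < 4, 16 * (cycNum n f α i j : ℤ) = oddTable16 n x (-1) i j)
    {i j i' j' : ℕ}
    (h : (i, j, i', j') ∈ ({(0, 1, 0, 2), (0, 2, 2, 3), (1, 2, 1, 3), (1, 3, 0, 3)} :
      Finset (ℕ × ℕ × ℕ × ℕ))) :
    IsAlmostComplementaryPair (cycSeq n f α i j) (cycSeq n f α i' j') := by
  simp only [Finset.mem_insert, Finset.mem_singleton, Prod.mk.injEq] at h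
  obtain ⟨hi, hj, hi', hj', hij, hij'⟩ : i < 4 ∧ j < 4 ∧ i' < 4 ∧ j' < 4 ∧ i ≠ j ∧ i' ≠ j' := by
    omega
  refine ⟨fun σ hσ ↦ ?_, fun δ ↦ ?_⟩
  · obtain ⟨k, hk, hσk⟩ := exists_mem_cycClass hf hα hgen hσ
    have h1 := sixteen_mul_binCorr_cycSeq hnf hf hα hgen hTab hi hj hi hj hk hij hij hσk
    have h2 := sixteen_mul_binCorr_cycSeq hnf hf hα hgen hTab hi' hj' hi' hj' hk hij' hij' hσk
    rcases h with ⟨rfl, rfl, rfl, rfl⟩ | ⟨rfl, rfl, rfl, rfl⟩ | ⟨rfl, rfl, rfl, rfl⟩ |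
      ⟨rfl, rfl, rfl, rfl⟩ <;> interval_cases k <;> norm_num [oddTable16] at h1 h2 <;> linarith
  rcases eq_or_ne δ 0 with rfl | hδ
  · left
    have hn : (n : ℤ) = 4 * f + 1 := by exact_mod_cast hnf
    rw [binCorr_cycSeq hnf hf hα hi hj hi' hj' hij hij',
      binCorr_cycSeq hnf hf hα hi' hj' hi hj hij' hij]
    simp only [matchCount_cycClass_zero hf hα, hi, hj, hi', hj']
    rcases h with ⟨rfl, rfl, rfl, rfl⟩ | ⟨rfl, rfl, rfl, rfl⟩ | ⟨rfl, rfl, rfl, rfl⟩ |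
      ⟨rfl, rfl, rfl, rfl⟩ <;> norm_num <;> linarith
  · obtain ⟨k, hk, hδk⟩ := exists_mem_cycClass hf hα hgen hδ
    have h1 := sixteen_mul_binCorr_cycSeq hnf hf hα hgen hTab hi hj hi' hj' hk hij hij' hδk
    have h2 := sixteen_mul_binCorr_cycSeq hnf hf hα hgen hTab hi' hj' hi hj hk hij' hij hδk
    rcases h with ⟨rfl, rfl, rfl, rfl⟩ | ⟨rfl, rfl, rfl, rfl⟩ | ⟨rfl, rfl, rfl, rfl⟩ |
      ⟨rfl, rfl, rfl, rfl⟩ <;> interval_cases k <;> norm_num [oddTable16] at h1 h2 <;>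
      first | (left; linarith) | (right; linarith)

end OddTable

theorem stmt11_general (n f : ℕ) (hp : n.Prime) (hnf : n = 4 * f + 1)
    (x y : ℤ) (hy : y = -1)
    (α : ZMod n) (hα : ∀ z : ZMod n, z ≠ 0 → ∃ k : ℕ, z = α ^ k)
    (hTab : ∀ i < 4, ∀ j < 4, 16 * (cycNum n f α i j : ℤ) = oddTable16 (n : ℤ) x y i j)
    (e0 e1 e2 : ZMod 2) (he : e0 + e1 + e2 = 0)
    (a0 a1 a2 a3 : ZMod n → ZMod 2)
    (ha : (a0, a1, a2, a3) ∈
      ({(cycSeq n f α 0 1, cycSeq n f α 0 2, cycSeq n f α 0 2, cycSeq n f α 0 1),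
        (cycSeq n f α 0 2, cycSeq n f α 0 1, cycSeq n f α 0 1, cycSeq n f α 0 2),
        (cycSeq n f α 0 2, cycSeq n f α 2 3, cycSeq n f α 2 3, cycSeq n f α 0 2),
        (cycSeq n f α 2 3, cycSeq n f α 0 2, cycSeq n f α 0 2, cycSeq n f α 2 3),
        (cycSeq n f α 1 2, cycSeq n f α 1 3, cycSeq n f α 1 3, cycSeq n f α 1 2),
        (cycSeq n f α 1 3, cycSeq n f α 1 2, cycSeq n f α 1 2, cycSeq n f α 1 3),
        (cycSeq n f α 1 3, cycSeq n f α 0 3, cycSeq n f α 0 3, cycSeq n f α 1 3),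
        (cycSeq n f α 0 3, cycSeq n f α 1 3, cycSeq n f α 1 3, cycSeq n f α 0 3)} :
        Set ((ZMod n → ZMod 2) × (ZMod n → ZMod 2) × (ZMod n → ZMod 2) × (ZMod n → ZMod 2))))
    (u : ZMod (2 * n) → ZMod 4) (hu : u = constructionI n a0 a1 a2 a3 e0 e1 e2) :
    ∀ τ : ℕ, 1 ≤ τ → τ < 2 * n →
      quadCorr (2 * n) u u ((τ : ℕ) : ZMod (2 * n)) = 2 ∨
        quadCorr (2 * n) u u ((τ : ℕ) : ZMod (2 * n)) = -2 := by
  have : Fact n.Prime := ⟨hp⟩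
  have hf : 0 < f := by have := hp.two_le; omega
  have hord : orderOf α = 4 * f := by
    rw [orderOf_eq_sub_one_of_forall_eq_pow (by omega) hα, hnf, Nat.add_sub_cancel]
  have hn : Odd n := ⟨2 * f, by omega⟩
  have pair {i j i' j' : ℕ} (h : (i, j, i', j') ∈ ({(0, 1, 0, 2), (0, 2, 2, 3), (1, 2, 1, 3),
      (1, 3, 0, 3)} : Finset (ℕ × ℕ × ℕ × ℕ))) :=
    isAlmostComplementaryPair_cycSeq hnf hf hord hα (hy ▸ hTab) h
  intro τ hτ₀ hτ
  subst hu
  simp only [Set.mem_insert_iff, Set.mem_singleton_iff, Prod.mk.injEq] at ha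
  rcases ha with ⟨rfl, rfl, rfl, rfl⟩ | ⟨rfl, rfl, rfl, rfl⟩ | ⟨rfl, rfl, rfl, rfl⟩ |
    ⟨rfl, rfl, rfl, rfl⟩ | ⟨rfl, rfl, rfl, rfl⟩ | ⟨rfl, rfl, rfl, rfl⟩ | ⟨rfl, rfl, rfl, rfl⟩ |
    ⟨rfl, rfl, rfl, rfl⟩
  · exact (pair (by decide)).quadCorr_constructionI hn he hτ₀ hτ
  · exact (pair (by decide)).symm.quadCorr_constructionI hn he hτ₀ hτ
  · exact (pair (by decide)).quadCorr_constructionI hn he hτ₀ hτ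
  · exact (pair (by decide)).symm.quadCorr_constructionI hn he hτ₀ hτ
  · exact (pair (by decide)).quadCorr_constructionI hn he hτ₀ hτ
  · exact (pair (by decide)).symm.quadCorr_constructionI hn he hτ₀ hτ
  · exact (pair (by decide)).quadCorr_constructionI hn he hτ₀ hτ
  · exact (pair (by decide)).symm.quadCorr_constructionI hn he hτ₀ hτ

theorem stmt11 (n f : ℕ) (hp : n.Prime) (hnf : n = 4 * f + 1) (hf : Odd f)
    (x y : ℤ) (hxy : (n : ℤ) = x ^ 2 + 4 * y ^ 2) (hy : y = -1)
    (α : ZMod n) (hα : ∀ z : ZMod n, z ≠ 0 → ∃ k : ℕ, z = α ^ k)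
    (hTab : ∀ i < 4, ∀ j < 4, 16 * (cycNum n f α i j : ℤ) = oddTable16 (n : ℤ) x y i j)
    (e0 e1 e2 : ZMod 2) (he : e0 + e1 + e2 = 0)
    (a0 a1 a2 a3 : ZMod n → ZMod 2)
    (ha : (a0, a1, a2, a3) ∈
      ({(cycSeq n f α 0 1, cycSeq n f α 0 2, cycSeq n f α 0 2, cycSeq n f α 0 1),
        (cycSeq n f α 0 2, cycSeq n f α 0 1, cycSeq n f α 0 1, cycSeq n f α 0 2),
        (cycSeq n f α 0 2, cycSeq n f α 2 3, cycSeq n f α 2 3, cycSeq n f α 0 2),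
        (cycSeq n f α 2 3, cycSeq n f α 0 2, cycSeq n f α 0 2, cycSeq n f α 2 3),
        (cycSeq n f α 1 2, cycSeq n f α 1 3, cycSeq n f α 1 3, cycSeq n f α 1 2),
        (cycSeq n f α 1 3, cycSeq n f α 1 2, cycSeq n f α 1 2, cycSeq n f α 1 3),
        (cycSeq n f α 1 3, cycSeq n f α 0 3, cycSeq n f α 0 3, cycSeq n f α 1 3),
        (cycSeq n f α 0 3, cycSeq n f α 1 3, cycSeq n f α 1 3, cycSeq n f α 0 3)} :
        Set ((ZMod n → ZMod 2) × (ZMod n → ZMod 2) × (ZMod n → ZMod 2) × (ZMod n → ZMod 2))))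
    (u : ZMod (2 * n) → ZMod 4) (hu : u = constructionI n a0 a1 a2 a3 e0 e1 e2) :
    ∀ τ : ℕ, 1 ≤ τ → τ < 2 * n →
      quadCorr (2 * n) u u ((τ : ℕ) : ZMod (2 * n)) = 2 ∨
        quadCorr (2 * n) u u ((τ : ℕ) : ZMod (2 * n)) = -2 :=
  stmt11_general n f hp hnf x y hy α hα hTab e0 e1 e2 he a0 a1 a2 a3 ha u hu
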